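/- arXiv:2302.00405 — 2 statements merged into one kernel-verified Lean document; each statement's English description precedes it below -/
import Mathlib

section
/- For all n ≥ 1, s(2n) = s(n) + t(n-1), where s and t are the Rudin-Shapiro summatory functions. -/
def rs : ℕ → ℤ
  | 0 => 1
  | (n+1) =>
    if (n+1) % 2 = 0 then rs ((n+1)/2)
    else (-1)^((n+1)/2) * rs ((n+1)/2)
decreasing_by all_goals exact Nat.div_lt_self (Nat.succ_pos n) (by norm_num)

def s (n : ℕ) : ℤ := ∑ i ∈ Finset.range (n+1), rs i

def t (n : ℕ) : ℤ := ∑ i ∈ Finset.range (n+1), (-1)^i * rs i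

/-! Sorting the terms of `s(2n)` by parity, the even ones `a(2k) = a(k)` sum to `s(n)` and the odd
ones `a(2k+1) = (-1)^k a(k)` to `t(n-1)`. Equivalently, in the form `s(2n+2) = s(n+1) + t(n)`
(free of truncated subtraction), both sides grow by `a(n+2) + (-1)^(n+1) a(n+1)` from `n` to `n+1`. -/

lemma rs_two_mul_add_two (k : ℕ) : rs (2 * k + 2) = rs (k + 1) := by
  rw [rs, if_pos (by omega), show (2 * k + 1 + 1) / 2 = k + 1 by omega]

lemma rs_two_mul_add_one (k : ℕ) : rs (2 * k + 1) = (-1) ^ k * rs k := by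
  rw [rs, if_neg (by omega), show (2 * k + 1) / 2 = k by omega]

lemma s_succ (n : ℕ) : s (n + 1) = s n + rs (n + 1) :=
  Finset.sum_range_succ _ _

lemma t_succ (n : ℕ) : t (n + 1) = t n + (-1) ^ (n + 1) * rs (n + 1) :=
  Finset.sum_range_succ _ _

lemma s_two_mul_add_two (n : ℕ) : s (2 * n + 2) = s (n + 1) + t n := by
  induction n with
  | zero =>
    have h0 : rs 0 = 1 := by rw [rs]
    have h1 : rs 1 = 1 := by simpa [h0] using rs_two_mul_add_one 0
    have h2 : rs 2 = 1 := by simpa [h1] using rs_two_mul_add_two 0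
    simp [s, t, Finset.sum_range_succ, h0, h1, h2]
  | succ n ih =>
    calc s (2 * (n + 1) + 2)
        = s (2 * n + 2) + rs (2 * (n + 1) + 1) + rs (2 * (n + 1) + 2) := by
          rw [show 2 * (n + 1) + 2 = 2 * n + 2 + 1 + 1 by ring, s_succ, s_succ]; rfl
      _ = s (n + 1) + t n + (-1) ^ (n + 1) * rs (n + 1) + rs (n + 2) := by
          rw [ih, rs_two_mul_add_one, rs_two_mul_add_two]
      _ = s (n + 1 + 1) + t (n + 1) := by
          rw [s_succ (n + 1), t_succ]; ring

theorem stmt0 : ∀ n : ℕ, 1 ≤ n → s (2*n) = s n + t (n-1) := by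
  rintro (_ | n) hn
  · omega
  · simpa [mul_add] using s_two_mul_add_two n
end

section
/- For all n ≥ 1, t(n) ≤ √(3n); equivalently, t(n)² ≤ 3n. -/
theorem Finset.sum_range_two_mul {M : Type*} [AddCommMonoid M] (f : ℕ → M) (n : ℕ) :
    ∑ i ∈ range (2 * n), f i = ∑ i ∈ range n, (f (2 * i) + f (2 * i + 1)) := by
  induction n with
  | zero => simp
  | succ n ih => rw [mul_add, mul_one, sum_range_succ, sum_range_succ, sum_range_succ, ih, add_assoc]

namespace RudinShapiro

theorem rs_zero : rs 0 = 1 := by rw [rs]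

theorem rs_two_mul (k : ℕ) : rs (2 * k) = rs k := by
  rcases k with _ | k
  · rfl
  · rw [show 2 * (k + 1) = (2 * k + 1) + 1 by ring, rs]
    simp [show (2 * k + 1 + 1) % 2 = 0 by omega, show (2 * k + 1 + 1) / 2 = k + 1 by omega]

theorem rs_two_mul_add_one (k : ℕ) : rs (2 * k + 1) = (-1) ^ k * rs k := by
  rw [rs]
  simp [show (2 * k + 1) % 2 = 1 by omega, show (2 * k + 1) / 2 = k by omega]

theorem rs_eq_one_or_neg_one (n : ℕ) : rs n = 1 ∨ rs n = -1 := by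
  induction n using Nat.evenOddRec with
  | h0 => exact .inl rs_zero
  | h_even k ih => rwa [rs_two_mul]
  | h_odd k ih =>
    rw [rs_two_mul_add_one]
    rcases neg_one_pow_eq_or ℤ k with h | h <;> rcases ih with h' | h' <;> simp [h, h']

def rsAlt (n : ℕ) : ℤ := (-1) ^ n * rs n

theorem rsAlt_eq_one_or_neg_one (n : ℕ) : rsAlt n = 1 ∨ rsAlt n = -1 := by
  rcases neg_one_pow_eq_or ℤ n with h | h <;> rcases rs_eq_one_or_neg_one n with h' | h' <;>
    simp [rsAlt, h, h']

theorem rsAlt_two_mul (k : ℕ) : rsAlt (2 * k) = (-1) ^ k * rsAlt k := by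
  simp [rsAlt, rs_two_mul, pow_mul, ← mul_assoc, ← pow_add, ← two_mul]

theorem rsAlt_two_mul_add_one (k : ℕ) : rsAlt (2 * k + 1) = -rsAlt k := by
  simp [rsAlt, rs_two_mul_add_one, pow_succ, pow_mul]

theorem s_two_mul_add_one (k : ℕ) : s (2 * k + 1) = s k + t k := by
  rw [s, s, t, show 2 * k + 1 + 1 = 2 * (k + 1) by ring, Finset.sum_range_two_mul,
    ← Finset.sum_add_distrib]
  simp [rs_two_mul, rs_two_mul_add_one]

theorem t_two_mul_add_one (k : ℕ) : t (2 * k + 1) = s k - t k := by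
  rw [t, s, t, show 2 * k + 1 + 1 = 2 * (k + 1) by ring, Finset.sum_range_two_mul,
    ← Finset.sum_sub_distrib]
  simp [rs_two_mul, rs_two_mul_add_one, pow_succ, pow_mul, sub_eq_add_neg]

theorem s_two_mul (k : ℕ) : s (2 * k) = s k + t k - rsAlt k := by
  have h : s (2 * k + 1) = s (2 * k) + rs (2 * k + 1) := Finset.sum_range_succ _ _
  rw [s_two_mul_add_one, rs_two_mul_add_one] at h
  rw [rsAlt]
  linarith

theorem t_two_mul (k : ℕ) : t (2 * k) = s k - t k + rsAlt k := by
  have h : t (2 * k + 1) = t (2 * k) + rsAlt (2 * k + 1) := Finset.sum_range_succ _ _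
  rw [t_two_mul_add_one, rsAlt_two_mul_add_one] at h
  linarith

def potential (m : ℕ) : ℤ := (s m + 1) ^ 2 + (t m + 1) ^ 2

theorem potential_two_mul (k : ℕ) :
    potential (2 * k) = 2 * ((s k + 1) ^ 2 + (t k - rsAlt k) ^ 2) := by
  rw [potential, s_two_mul, t_two_mul]
  ring

theorem potential_two_mul_add_one (k : ℕ) :
    potential (2 * k + 1) = 2 * ((s k + 1) ^ 2 + t k ^ 2) := by
  rw [potential, s_two_mul_add_one, t_two_mul_add_one]
  ring

structure Invariant (m : ℕ) : Prop where
  t_nonneg : 0 ≤ t m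
  sub_lower : 1 - rsAlt m ≤ s m - t m
  one_le_t : rsAlt m = 1 → 1 ≤ t m
  two_le_t : rsAlt m = 1 → Odd m → 2 ≤ t m
  potential_le : potential m ≤ 6 * m + if Even m then 4 + 4 * rsAlt m else 4

theorem Invariant.t_le_s {m : ℕ} (h : Invariant m) : t m ≤ s m := by
  rcases rsAlt_eq_one_or_neg_one m with he | he <;> linarith [h.sub_lower]

theorem invariant_zero : Invariant 0 := by
  have hs : s 0 = 1 := by simp [s, rs_zero]
  have ht : t 0 = 1 := by simp [t, rs_zero]
  have he : rsAlt 0 = 1 := by simp [rsAlt, rs_zero]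
  constructor <;> simp [potential, hs, ht, he]

/- Once the recurrences are substituted and the sign of `rsAlt k` and the parity of `k` are
fixed, every field below is linear in the monomials of `s k` and `t k`. -/

theorem Invariant.two_mul_add_one {k : ℕ} (h : Invariant k) : Invariant (2 * k + 1) := by
  obtain ⟨h0, hd, h1, h2, hP⟩ := h
  rw [potential] at hP
  have hodd : Odd (2 * k + 1) := odd_two_mul_add_one k
  constructor <;>
    simp only [s_two_mul_add_one, t_two_mul_add_one, rsAlt_two_mul_add_one,
      potential_two_mul_add_one, hodd, Nat.not_even_iff_odd.mpr hodd, if_false, forall_const] <;>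
    rcases rsAlt_eq_one_or_neg_one k with he | he <;> split_ifs at hP <;> simp_all <;> linarith

theorem Invariant.two_mul {k : ℕ} (h : Invariant k) : Invariant (2 * k) := by
  obtain ⟨h0, hd, h1, h2, hP⟩ := h
  rw [potential] at hP
  have heven : Even (2 * k) := even_two_mul k
  constructor <;>
    simp only [s_two_mul, t_two_mul, rsAlt_two_mul, potential_two_mul, heven, if_true,
      Nat.not_odd_iff_even.mpr heven, false_imp_iff, imp_true_iff] <;>
    rcases rsAlt_eq_one_or_neg_one k with he | he <;>
    rcases Nat.even_or_odd k with hk | hk <;>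
    split_ifs at hP <;> simp_all [hk.neg_one_pow, ← Nat.not_even_iff_odd] <;> linarith

theorem invariant (m : ℕ) : Invariant m := by
  induction m using Nat.evenOddRec with
  | h0 => exact invariant_zero
  | h_even k ih => exact ih.two_mul
  | h_odd k ih => exact ih.two_mul_add_one

theorem t_two_mul_add_one_sq_le (k : ℕ) : t (2 * k + 1) ^ 2 ≤ 3 * ↑(2 * k + 1) := by
  have h := invariant k
  have hsq : t (2 * k + 1) ^ 2 = potential k - 2 * (s k + 1) * (t k + 1) := by
    rw [t_two_mul_add_one, potential]
    ring
  have hP := h.potential_le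
  have hst : 0 ≤ s k * t k := mul_nonneg (h.t_nonneg.trans h.t_le_s) h.t_nonneg
  rw [hsq]
  push_cast
  rcases rsAlt_eq_one_or_neg_one k with he | he
  · have := h.one_le_t he
    rw [he] at hP
    split_ifs at hP <;> linarith [h.t_le_s]
  · rw [he] at hP
    split_ifs at hP <;> linarith [h.t_nonneg, h.t_le_s]

theorem t_two_mul_sq_le {k : ℕ} (hk : 1 ≤ k) : t (2 * k) ^ 2 ≤ 3 * ↑(2 * k) := by
  obtain ⟨h0, hd, h1, h2, hP⟩ := invariant k
  rw [potential] at hP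
  rw [t_two_mul]
  push_cast
  rcases rsAlt_eq_one_or_neg_one k with he | he <;> split_ifs at hP <;> simp_all <;> nlinarith

end RudinShapiro

theorem stmt19 : ∀ n : ℕ, 1 ≤ n → (t n)^2 ≤ 3 * n := by
  intro n hn
  obtain ⟨k, rfl | rfl⟩ := Nat.even_or_odd' n
  · exact RudinShapiro.t_two_mul_sq_le (by omega)
  · exact RudinShapiro.t_two_mul_add_one_sq_le k
end
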